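/- Let u, z be words over {a,b}, and let w₁ = u·a and w₂ = u·b. Then m(w̄₁·a·z·b·w₂) = m(w̄₁·b·z̄·a·w₂), i.e. m(ā·ū·a·z·b·u·b) = m(ā·ū·b·z̄·a·u·b) where ā = a; explicitly: m(a·ū·a·z·b·u·b) = m(a·ū·b·z̄·a·u·b). -/

import Mathlib

def A : Matrix (Fin 2) (Fin 2) ℤ := !![1,1;1,2]
def B : Matrix (Fin 2) (Fin 2) ℤ := !![2,1;1,1]
/-- matrix of a word: `false` is the letter `a`, `true` is the letter `b` -/
def Mw (w : List Bool) : Matrix (Fin 2) (Fin 2) ℤ :=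
  (w.map (fun x => if x then B else A)).prod
/-- the m-value: the top-right entry -/
def mval (w : List Bool) : ℤ := Mw w 0 1
def U : Matrix (Fin 2) (Fin 2) ℤ := !![0,-1;1,0]
def J : Matrix (Fin 2) (Fin 2) ℤ := !![0,1;1,0]
/-- reversal with letters exchanged -/
def Ebar (w : List Bool) : List Bool := (w.map (fun x => !x)).reverse
def pell : ℕ → ℕ
  | 0 => 0
  | 1 => 1
  | n+2 => 2 * pell (n+1) + pell n

/-!
Since `A` and `B` are symmetric, reversing a word transposes its matrix. Writing `P = M(u)`,
`Z = M(z)` and `X = A Z B`, the two sides are the `(0,1)` entries of `(PA)ᵀ X (PB)` and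
`(PA)ᵀ Xᵀ (PB)`. The first column of `A` and the second column of `B` are both `(1,1)`, so these
entries are the values of the quadratic forms of `X` and `Xᵀ` at the same vector `P (1,1)`,
and a quadratic form does not change under transposition.
-/

open Matrix

lemma Mw_cons (c : Bool) (w : List Bool) : Mw (c :: w) = (if c then B else A) * Mw w := rfl

lemma Mw_singleton_false : Mw [false] = A := mul_one A

lemma Mw_singleton_true : Mw [true] = B := mul_one B

lemma Mw_append (x y : List Bool) : Mw (x ++ y) = Mw x * Mw y := by
  simp [Mw]

lemma A_transpose : Aᵀ = A := by decide

lemma B_transpose : Bᵀ = B := by decide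

lemma Mw_reverse (w : List Bool) : Mw w.reverse = (Mw w)ᵀ := by
  induction w with
  | nil => exact transpose_one.symm
  | cons c w ih =>
    rw [List.reverse_cons, Mw_append, ih, Mw_cons c w, transpose_mul]
    cases c
    · rw [Mw_singleton_false, if_neg Bool.false_ne_true, A_transpose]
    · rw [Mw_singleton_true, if_pos rfl, B_transpose]

theorem Matrix.transpose_mul_transpose_mul_apply_of_col_eq {m n R : Type*} [Fintype m]
    [CommSemiring R] (C D : Matrix m n R) (X : Matrix m m R) {i j : n}
    (h : ∀ k, C k i = D k j) : (Cᵀ * Xᵀ * D) i j = (Cᵀ * X * D) i j := by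
  simp only [mul_apply, transpose_apply, h, Finset.sum_mul]
  rw [Finset.sum_comm]
  exact Finset.sum_congr rfl fun _ _ => Finset.sum_congr rfl fun _ _ => by ring

lemma mul_A_col_zero_eq_mul_B_col_one (P : Matrix (Fin 2) (Fin 2) ℤ) (k : Fin 2) :
    (P * A) k 0 = (P * B) k 1 := by
  simp [mul_apply, Fin.sum_univ_two, A, B]

theorem stmt11 (u z : List Bool) :
    mval ((u ++ [false]).reverse ++ [false] ++ z ++ [true] ++ (u ++ [true])) =
    mval ((u ++ [false]).reverse ++ [true] ++ z.reverse ++ [false] ++ (u ++ [true])) := by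
  have hX : (A * Mw z * B)ᵀ = B * (Mw z)ᵀ * A := by
    rw [transpose_mul, transpose_mul, A_transpose, B_transpose, mul_assoc]
  simp only [mval, Mw_append, Mw_reverse, Mw_singleton_false, Mw_singleton_true]
  have key := (Mw u * A).transpose_mul_transpose_mul_apply_of_col_eq (Mw u * B) (A * Mw z * B)
    (mul_A_col_zero_eq_mul_B_col_one (Mw u))
  rw [hX] at key
  simpa only [mul_assoc] using key.symm
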